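/- Let n ≥ 2 and let Φ_1, Φ_2 be finite compositions of order-preserving monomial blowing-downs of ℝ^n, giving the S-cones Γ_1 = Φ_1(ℝ_{≥0}^n) and Γ_2 = Φ_2(ℝ_{≥0}^n). Then there exists a finite composition Φ of order-preserving monomial blowing-downs such that Γ_1 ⊆ Φ(ℝ_{≥0}^n) and Γ_2 ⊆ Φ(ℝ_{≥0}^n). -/

import Mathlib

/-!
Compositions of blowing-ups and blowing-downs with `i < j` are linear and preserve the
lexicographic nonnegativity of vectors. Hence `Φₖ` sends the standard basis to lexicographically
nonnegative vectors, and it suffices to find one composition `Ψ` of blowing-ups that makes all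
`2n` of these vectors nonnegative: then `Ψ ∘ Φₖ` maps `ℝ_{≥0}^n` into itself, and the reversed
composition `Φ` of the inverse blowing-downs satisfies `Φ ∘ Ψ = id`, so `Γₖ ⊆ Φ(ℝ_{≥0}^n)`.

For a single lexicographically nonnegative vector `v` with `v j < 0`, the leading coordinate
`k < j` of `v` is positive, and a large power of `φ_{kj}` makes coordinate `j` nonnegative without
changing the others. Since blowing-ups map `ℝ_{≥0}^n` into itself, a finite set of vectors can
then be handled one vector at a time.
-/

noncomputable section

/-- The monomial blowing-up `φ_{ij}` of `ℝ^n` (for distinct `i`, `j`): the `j`-th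
coordinate becomes `a i + a j`, the other coordinates are unchanged. -/
def blowUp (n : ℕ) (i j : Fin n) : (Fin n → ℝ) → (Fin n → ℝ) :=
  fun a l => if l = j then a i + a j else a l

/-- The monomial blowing-down `φ_{ij}⁻¹` of `ℝ^n`, the inverse of `blowUp n i j`. -/
def blowDown (n : ℕ) (i j : Fin n) : (Fin n → ℝ) → (Fin n → ℝ) :=
  fun a l => if l = j then a l - a i else a l

/-- `Φ` is a finite composition of order-preserving monomial blowing-ups `φ_{ij}`, `i < j`. -/
def IsBlowUpComp (n : ℕ) (Φ : (Fin n → ℝ) → (Fin n → ℝ)) : Prop :=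
  ∃ L : List ((Fin n → ℝ) → (Fin n → ℝ)),
    (∀ g ∈ L, ∃ i j : Fin n, i < j ∧ g = blowUp n i j) ∧ Φ = L.foldr (· ∘ ·) id

/-- `Φ` is a finite composition of order-preserving monomial blowing-downs `φ_{ij}⁻¹`, `i < j`. -/
def IsBlowDownComp (n : ℕ) (Φ : (Fin n → ℝ) → (Fin n → ℝ)) : Prop :=
  ∃ L : List ((Fin n → ℝ) → (Fin n → ℝ)),
    (∀ g ∈ L, ∃ i j : Fin n, i < j ∧ g = blowDown n i j) ∧ Φ = L.foldr (· ∘ ·) id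

open Function Finset

theorem exists_foldr_comp_iff_mem_closure {α : Type*} {G : Set (Function.End α)} {f : α → α} :
    (∃ L : List (α → α), (∀ g ∈ L, g ∈ G) ∧ f = L.foldr (· ∘ ·) id) ↔
      f ∈ Submonoid.closure G := by
  constructor
  · rintro ⟨L, hL, rfl⟩
    exact List.prod_eq_foldr (α := Function.End α) ▸ list_prod_mem (M := Function.End α)
      (S := Submonoid.closure G) (l := L) fun g hg => Submonoid.subset_closure (hL g hg)
  · intro hf
    obtain ⟨L, hL, rfl⟩ := Submonoid.exists_list_of_mem_closure (M := Function.End α) hf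
    exact ⟨L, hL, List.prod_eq_foldr (α := Function.End α)⟩

theorem mapsTo_of_mem_closure {α : Type*} {G : Set (Function.End α)} {s : Set α}
    (hG : ∀ g ∈ G, Set.MapsTo g s s) {f : Function.End α} (hf : f ∈ Submonoid.closure G) :
    Set.MapsTo f s s :=
  Submonoid.closure_induction hG (Set.mapsTo_id s) (fun _ _ _ _ h₁ h₂ => h₁.comp h₂) hf

theorem isLinearMap_of_mem_closure {M : Type*} [AddCommMonoid M] [Module ℝ M]
    {G : Set (Function.End M)} (hG : ∀ g ∈ G, IsLinearMap ℝ g) {f : Function.End M}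
    (hf : f ∈ Submonoid.closure G) : IsLinearMap ℝ f :=
  Submonoid.closure_induction hG LinearMap.id.isLinear
    (fun g h _ _ hg hh => (IsLinearMap.mk' g hg ∘ₗ IsLinearMap.mk' h hh).isLinear) hf

theorem LinearMap.nonneg_apply_of_nonneg_single {ι M : Type*} [Fintype ι] [DecidableEq ι]
    [AddCommGroup M] [PartialOrder M] [IsOrderedAddMonoid M] [Module ℝ M] [PosSMulMono ℝ M]
    (f : (ι → ℝ) →ₗ[ℝ] M) (h : ∀ c, 0 ≤ f (Pi.single c 1)) {v : ι → ℝ}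
    (hv : 0 ≤ v) : 0 ≤ f v := by
  rw [← LinearMap.sum_single_apply _ v, map_sum]
  refine sum_nonneg fun c _ => ?_
  rw [← mul_one (v c), ← smul_eq_mul, Pi.single_smul', map_smul]
  exact smul_nonneg (hv c) (h c)

namespace Pi

variable {ι : Type*} [LinearOrder ι] {v : ι → ℝ}

theorem toLex_pos_iff : 0 < toLex v ↔ ∃ k, (∀ l < k, v l = 0) ∧ 0 < v k :=
  exists_congr fun _ => and_congr_left' <| forall₂_congr fun _ _ => eq_comm

theorem toLex_nonneg_iff : 0 ≤ toLex v ↔ v = 0 ∨ ∃ k, (∀ l < k, v l = 0) ∧ 0 < v k :=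
  le_iff_eq_or_lt.trans <| or_congr
    ⟨fun h => congrArg ofLex h.symm, fun h => congrArg toLex h.symm⟩ toLex_pos_iff

theorem toLex_nonneg_add_smul_single {i j : ι} (hij : i < j) (c : ℝ) (hv : 0 ≤ toLex v) :
    0 ≤ toLex (v + c • Pi.single j (v i)) := by
  obtain rfl | ⟨k, hk, hvk⟩ := toLex_nonneg_iff.1 hv
  · simp
  by_cases hvi : v i = 0
  · simpa [hvi] using hv
  have hki : k ≤ i := not_lt.1 fun hik => hvi (hk i hik)
  refine (toLex_pos_iff.2 ⟨k, fun l hl => ?_, ?_⟩).le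
  · simp [((hl.trans_le hki).trans hij).ne, hk l hl]
  · simpa [(hki.trans_lt hij).ne] using hvk

theorem exists_lt_pos_of_toLex_nonneg {j : ι} (hv : 0 ≤ toLex v) (hj : v j < 0) :
    ∃ k < j, 0 < v k := by
  obtain rfl | ⟨k, hk, hvk⟩ := toLex_nonneg_iff.1 hv
  · exact absurd hj (lt_irrefl 0)
  refine ⟨k, lt_of_not_ge fun hjk => ?_, hvk⟩
  rcases hjk.lt_or_eq with hjk | rfl
  · exact hj.ne (hk j hjk)
  · exact hj.not_gt hvk

end Pi

section BlowUps

variable {n : ℕ} {Φ Φ' Ψ Ψ' : (Fin n → ℝ) → (Fin n → ℝ)}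

theorem blowUp_eq_add_single (i j : Fin n) (v : Fin n → ℝ) :
    blowUp n i j v = v + Pi.single j (v i) := by
  ext l
  by_cases hl : l = j <;> simp [blowUp, hl, add_comm]

theorem blowDown_eq_sub_single (i j : Fin n) (v : Fin n → ℝ) :
    blowDown n i j v = v - Pi.single j (v i) := by
  ext l
  by_cases hl : l = j <;> simp [blowDown, hl]

theorem blowDown_leftInverse_blowUp {i j : Fin n} (hij : i ≠ j) :
    LeftInverse (blowDown n i j) (blowUp n i j) := fun v => by
  simp [blowDown_eq_sub_single, blowUp_eq_add_single, hij]

theorem isLinearMap_blowUp (i j : Fin n) : IsLinearMap ℝ (blowUp n i j) := by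
  refine ⟨fun x y => ?_, fun c x => ?_⟩ <;>
    simp only [blowUp_eq_add_single, Pi.add_apply, Pi.smul_apply, Pi.single_add, Pi.single_smul',
      smul_add]
  abel

theorem isLinearMap_blowDown (i j : Fin n) : IsLinearMap ℝ (blowDown n i j) := by
  refine ⟨fun x y => ?_, fun c x => ?_⟩ <;>
    simp only [blowDown_eq_sub_single, Pi.add_apply, Pi.smul_apply, Pi.single_add, Pi.single_smul',
      smul_sub]
  abel

theorem iterate_blowUp {i j : Fin n} (hij : i ≠ j) (m : ℕ) (v : Fin n → ℝ) :
    (blowUp n i j)^[m] v = update v j (v j + m * v i) := by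
  induction m with
  | zero => simp
  | succ m ih =>
    ext l
    by_cases hl : l = j
    · simp [iterate_succ_apply', ih, blowUp, hl, hij]
      ring
    · simp [iterate_succ_apply', ih, blowUp, hl]

def blowUpMonoid (n : ℕ) : Submonoid (Function.End (Fin n → ℝ)) :=
  Submonoid.closure {g | ∃ i j, i < j ∧ g = blowUp n i j}

def blowDownMonoid (n : ℕ) : Submonoid (Function.End (Fin n → ℝ)) :=
  Submonoid.closure {g | ∃ i j, i < j ∧ g = blowDown n i j}

theorem isBlowUpComp_iff_mem : IsBlowUpComp n Ψ ↔ Ψ ∈ blowUpMonoid n :=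
  exists_foldr_comp_iff_mem_closure

theorem isBlowDownComp_iff_mem : IsBlowDownComp n Φ ↔ Φ ∈ blowDownMonoid n :=
  exists_foldr_comp_iff_mem_closure

theorem isBlowUpComp_id : IsBlowUpComp n id :=
  isBlowUpComp_iff_mem.2 (blowUpMonoid n).one_mem

theorem isBlowDownComp_id : IsBlowDownComp n id :=
  isBlowDownComp_iff_mem.2 (blowDownMonoid n).one_mem

theorem IsBlowUpComp.comp (hΨ : IsBlowUpComp n Ψ) (hΨ' : IsBlowUpComp n Ψ') :
    IsBlowUpComp n (Ψ ∘ Ψ') :=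
  isBlowUpComp_iff_mem.2 <|
    (blowUpMonoid n).mul_mem (isBlowUpComp_iff_mem.1 hΨ) (isBlowUpComp_iff_mem.1 hΨ')

theorem IsBlowDownComp.comp (hΦ : IsBlowDownComp n Φ) (hΦ' : IsBlowDownComp n Φ') :
    IsBlowDownComp n (Φ ∘ Φ') :=
  isBlowDownComp_iff_mem.2 <|
    (blowDownMonoid n).mul_mem (isBlowDownComp_iff_mem.1 hΦ) (isBlowDownComp_iff_mem.1 hΦ')

theorem isBlowUpComp_iterate_blowUp {i j : Fin n} (hij : i < j) (m : ℕ) :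
    IsBlowUpComp n (blowUp n i j)^[m] :=
  isBlowUpComp_iff_mem.2 <|
    (blowUpMonoid n).pow_mem (Submonoid.subset_closure ⟨i, j, hij, rfl⟩) m

theorem isBlowDownComp_blowDown {i j : Fin n} (hij : i < j) :
    IsBlowDownComp n (blowDown n i j) :=
  isBlowDownComp_iff_mem.2 (Submonoid.subset_closure ⟨i, j, hij, rfl⟩)

theorem IsBlowUpComp.exists_leftInverse (hΨ : IsBlowUpComp n Ψ) :
    ∃ Φ, IsBlowDownComp n Φ ∧ LeftInverse Φ Ψ := by
  refine Submonoid.closure_induction (M := Function.End _)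
    (motive := fun Ψ _ => ∃ Φ, IsBlowDownComp n Φ ∧ LeftInverse Φ Ψ) ?_ ?_ ?_
    (isBlowUpComp_iff_mem.1 hΨ)
  · rintro _ ⟨i, j, hij, rfl⟩
    exact ⟨_, isBlowDownComp_blowDown hij, blowDown_leftInverse_blowUp hij.ne⟩
  · exact ⟨id, isBlowDownComp_id, fun _ => rfl⟩
  · rintro Ψ₁ Ψ₂ - - ⟨Φ₁, hΦ₁, h₁⟩ ⟨Φ₂, hΦ₂, h₂⟩
    exact ⟨Φ₂ ∘ Φ₁, hΦ₂.comp hΦ₁, h₁.comp h₂⟩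

theorem IsBlowUpComp.isLinearMap (hΨ : IsBlowUpComp n Ψ) : IsLinearMap ℝ Ψ :=
  isLinearMap_of_mem_closure (by rintro _ ⟨i, j, -, rfl⟩; exact isLinearMap_blowUp i j)
    (isBlowUpComp_iff_mem.1 hΨ)

theorem IsBlowDownComp.isLinearMap (hΦ : IsBlowDownComp n Φ) : IsLinearMap ℝ Φ :=
  isLinearMap_of_mem_closure (by rintro _ ⟨i, j, -, rfl⟩; exact isLinearMap_blowDown i j)
    (isBlowDownComp_iff_mem.1 hΦ)

theorem IsBlowUpComp.nonneg (hΨ : IsBlowUpComp n Ψ) {v : Fin n → ℝ} (hv : 0 ≤ v) :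
    0 ≤ Ψ v := by
  refine mapsTo_of_mem_closure (s := Set.Ici 0) ?_ (isBlowUpComp_iff_mem.1 hΨ) hv
  rintro _ ⟨i, j, -, rfl⟩ v (hv : 0 ≤ v)
  rw [Set.mem_Ici, blowUp_eq_add_single]
  exact add_nonneg hv (Pi.single_nonneg.2 (hv i))

theorem IsBlowUpComp.toLex_nonneg (hΨ : IsBlowUpComp n Ψ) {v : Fin n → ℝ}
    (hv : 0 ≤ toLex v) : 0 ≤ toLex (Ψ v) := by
  refine mapsTo_of_mem_closure (s := {v | 0 ≤ toLex v}) ?_ (isBlowUpComp_iff_mem.1 hΨ) hv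
  rintro _ ⟨i, j, hij, rfl⟩ v (hv : 0 ≤ toLex v)
  simpa [blowUp_eq_add_single] using Pi.toLex_nonneg_add_smul_single hij 1 hv

theorem IsBlowDownComp.toLex_nonneg (hΦ : IsBlowDownComp n Φ) {v : Fin n → ℝ}
    (hv : 0 ≤ toLex v) : 0 ≤ toLex (Φ v) := by
  refine mapsTo_of_mem_closure (s := {v | 0 ≤ toLex v}) ?_ (isBlowDownComp_iff_mem.1 hΦ) hv
  rintro _ ⟨i, j, hij, rfl⟩ v (hv : 0 ≤ toLex v)
  simpa [blowDown_eq_sub_single, sub_eq_add_neg] using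
    Pi.toLex_nonneg_add_smul_single hij (-1) hv

theorem exists_isBlowUpComp_apply_nonneg {v : Fin n → ℝ} (hv : 0 ≤ toLex v) :
    ∃ Ψ, IsBlowUpComp n Ψ ∧ 0 ≤ Ψ v := by
  obtain ⟨N, hN⟩ : ∃ N, #{j | v j < 0} = N := ⟨_, rfl⟩
  induction N using Nat.strong_induction_on generalizing v with
  | _ N ih =>
    by_cases hv₀ : 0 ≤ v
    · exact ⟨id, isBlowUpComp_id, hv₀⟩
    obtain ⟨j, hj⟩ : ∃ j, v j < 0 := by simpa [Pi.le_def] using hv₀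
    obtain ⟨k, hkj, hk⟩ := Pi.exists_lt_pos_of_toLex_nonneg hv hj
    obtain ⟨m, hm⟩ := exists_nat_ge (-v j / v k)
    set w := (blowUp n k j)^[m] v with hw
    rw [iterate_blowUp hkj.ne] at hw
    have hwj : 0 ≤ w j := by
      rw [hw, update_self]
      linarith [(div_le_iff₀ hk).1 hm]
    have hfewer : #{l | w l < 0} < N := by
      refine hN ▸ card_lt_card ((Finset.ssubset_iff_of_subset fun l => ?_).2
        ⟨j, by simpa using hj, by simpa using hwj⟩)
      simp only [mem_filter_univ]
      intro hl
      have hlj : l ≠ j := by rintro rfl; exact hwj.not_gt hl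
      rwa [hw, update_of_ne hlj] at hl
    obtain ⟨Ψ, hΨ, hΨw⟩ :=
      ih _ hfewer ((isBlowUpComp_iterate_blowUp hkj m).toLex_nonneg hv) rfl
    exact ⟨Ψ ∘ (blowUp n k j)^[m], hΨ.comp (isBlowUpComp_iterate_blowUp hkj m), hΨw⟩

theorem exists_isBlowUpComp_forall_nonneg (S : Finset (Fin n → ℝ))
    (hS : ∀ v ∈ S, 0 ≤ toLex v) : ∃ Ψ, IsBlowUpComp n Ψ ∧ ∀ v ∈ S, 0 ≤ Ψ v := by
  induction S using Finset.induction_on with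
  | empty => exact ⟨id, isBlowUpComp_id, by simp⟩
  | insert v S _ ih =>
    obtain ⟨Ψ, hΨ, hΨS⟩ := ih fun w hw => hS w (mem_insert_of_mem hw)
    obtain ⟨Ψ', hΨ', hΨ'v⟩ :=
      exists_isBlowUpComp_apply_nonneg (hΨ.toLex_nonneg (hS v (mem_insert_self v S)))
    refine ⟨Ψ' ∘ Ψ, hΨ'.comp hΨ, fun w hw => ?_⟩
    rcases mem_insert.1 hw with rfl | hw
    · exact hΨ'v
    · exact hΨ'.nonneg (hΨS w hw)

theorem image_Ici_zero_subset_of_leftInverse (hΦ' : IsBlowDownComp n Φ')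
    (hΨ : IsBlowUpComp n Ψ) (hΦΨ : LeftInverse Φ Ψ) (h : ∀ c, 0 ≤ Ψ (Φ' (Pi.single c 1))) :
    Φ' '' Set.Ici 0 ⊆ Φ '' Set.Ici 0 := by
  rintro _ ⟨v, hv, rfl⟩
  refine ⟨Ψ (Φ' v), ?_, hΦΨ _⟩
  exact (IsLinearMap.mk' _ hΨ.isLinearMap ∘ₗ IsLinearMap.mk' _ hΦ'.isLinearMap)
    |>.nonneg_apply_of_nonneg_single h hv

end BlowUps

theorem exists_common_sCone_general (n : ℕ)
    (Φ₁ Φ₂ : (Fin n → ℝ) → (Fin n → ℝ))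
    (h₁ : IsBlowDownComp n Φ₁) (h₂ : IsBlowDownComp n Φ₂) :
    ∃ Φ : (Fin n → ℝ) → (Fin n → ℝ), IsBlowDownComp n Φ ∧
      Φ₁ '' {v | ∀ l, 0 ≤ v l} ⊆ Φ '' {v | ∀ l, 0 ≤ v l} ∧
      Φ₂ '' {v | ∀ l, 0 ≤ v l} ⊆ Φ '' {v | ∀ l, 0 ≤ v l} := by
  have hbasis : ∀ c, 0 ≤ toLex (Pi.single c 1 : Fin n → ℝ) := fun c =>
    Pi.toLex_monotone (Pi.single_nonneg.2 zero_le_one : (0 : Fin n → ℝ) ≤ Pi.single c 1)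
  set S := univ.image (fun c => Φ₁ (Pi.single c 1)) ∪
    univ.image (fun c => Φ₂ (Pi.single c 1))
  obtain ⟨Ψ, hΨ, hΨS⟩ := exists_isBlowUpComp_forall_nonneg S <| by
    simp only [S, mem_union, mem_image, mem_univ, true_and]
    rintro _ (⟨c, rfl⟩ | ⟨c, rfl⟩)
    exacts [h₁.toLex_nonneg (hbasis c), h₂.toLex_nonneg (hbasis c)]
  obtain ⟨Φ, hΦ, hΦΨ⟩ := hΨ.exists_leftInverse
  refine ⟨Φ, hΦ, image_Ici_zero_subset_of_leftInverse h₁ hΨ hΦΨ fun c => hΨS _ ?_,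
    image_Ici_zero_subset_of_leftInverse h₂ hΨ hΦΨ fun c => hΨS _ ?_⟩ <;>
    simp [S]

/-- **(Lemma `star`).**  Let `n ≥ 2` and let `Φ₁, Φ₂` be finite compositions of
order-preserving monomial blowing-downs of `ℝ^n`, giving the `S`-cones
`Γ₁ = Φ₁(ℝ_{≥0}^n)` and `Γ₂ = Φ₂(ℝ_{≥0}^n)`.  Then there is a finite composition `Φ`
of order-preserving monomial blowing-downs with `Γ₁ ⊆ Φ(ℝ_{≥0}^n)` and
`Γ₂ ⊆ Φ(ℝ_{≥0}^n)`. -/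
theorem exists_common_sCone (n : ℕ) (hn : 2 ≤ n)
    (Φ₁ Φ₂ : (Fin n → ℝ) → (Fin n → ℝ))
    (h₁ : IsBlowDownComp n Φ₁) (h₂ : IsBlowDownComp n Φ₂) :
    ∃ Φ : (Fin n → ℝ) → (Fin n → ℝ), IsBlowDownComp n Φ ∧
      Φ₁ '' {v | ∀ l, 0 ≤ v l} ⊆ Φ '' {v | ∀ l, 0 ≤ v l} ∧
      Φ₂ '' {v | ∀ l, 0 ≤ v l} ⊆ Φ '' {v | ∀ l, 0 ≤ v l} :=
  exists_common_sCone_general n Φ₁ Φ₂ h₁ h₂
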